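/- arXiv:2006.09144 — 2 statements merged into one kernel-verified Lean document; each statement's English description precedes it below -/
import Mathlib

section
/- (Block Gershgorin) Let B be an n×n real matrix partitioned into blocks B[i][j]. For each eigenvalue λ of B there exists at least one index i ∈ [N] such that either B[i][i] - λI is singular, or (‖(B[i][i] - λI)⁻¹‖_2)⁻¹ ≤ Σ_{j≠i} ‖B[i][j]‖_2. -/
open Matrix BigOperators Finset

noncomputable def specNorm {𝕜 : Type*} [RCLike 𝕜] {m n : Type*} [Fintype m] [Fintype n]
    [DecidableEq m] [DecidableEq n] (A : Matrix m n 𝕜) : ℝ :=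
  ‖LinearMap.toContinuousLinearMap (Matrix.toEuclideanLin A)‖

noncomputable def minEig {n : Type*} [Fintype n] [DecidableEq n] (A : Matrix n n ℝ) : ℝ :=
  sInf {μ : ℝ | (A - μ • 1).det = 0}

noncomputable def maxEig {n : Type*} [Fintype n] [DecidableEq n] (A : Matrix n n ℝ) : ℝ :=
  sSup {μ : ℝ | (A - μ • 1).det = 0}

def blk {N : ℕ} {d : Fin N → ℕ}
    (B : Matrix ((i : Fin N) × Fin (d i)) ((i : Fin N) × Fin (d i)) ℝ) (i j : Fin N) :
    Matrix (Fin (d i)) (Fin (d j)) ℝ := fun a b => B ⟨i, a⟩ ⟨j, b⟩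

noncomputable def eNorm {k : ℕ} (v : Fin k → ℝ) : ℝ := Real.sqrt (∑ a, v a ^ 2)

noncomputable def blockVecNorm {N : ℕ} {d : Fin N → ℕ}
    (x : ((i : Fin N) × Fin (d i)) → ℝ) : ℝ :=
  ⨆ i, eNorm (fun a => x ⟨i, a⟩)

noncomputable def blockOpNorm {N : ℕ} {d : Fin N → ℕ}
    (B : Matrix ((i : Fin N) × Fin (d i)) ((i : Fin N) × Fin (d i)) ℝ) : ℝ :=
  sInf {c | 0 ≤ c ∧ ∀ x, blockVecNorm (B.mulVec x) ≤ c * blockVecNorm x}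

/-!
Let `v` be an eigenvector for `λ` and `i` a block index at which the Euclidean norm of the block
`vᵢ` is maximal. The `i`-th block row of `(B - λ) v = 0` reads `(Bᵢᵢ - λ) vᵢ = -∑_{j ≠ i} Bᵢⱼ vⱼ`,
so when `Bᵢᵢ - λ` is invertible,
`‖vᵢ‖ ≤ ‖(Bᵢᵢ - λ)⁻¹‖ ∑_{j ≠ i} ‖Bᵢⱼ‖ ‖vⱼ‖ ≤ ‖(Bᵢᵢ - λ)⁻¹‖ (∑_{j ≠ i} ‖Bᵢⱼ‖) ‖vᵢ‖`, and `‖vᵢ‖ > 0`.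
A real block acts on complex vectors with the same bound, as it acts separately on the real and
imaginary parts.
-/

section SpecNorm

variable {m n : Type*} [Fintype m] [Fintype n]

lemma norm_sq_toLp_eq_re_add_im (z : n → ℂ) :
    ‖WithLp.toLp 2 z‖ ^ 2
      = ‖WithLp.toLp 2 (fun i => (z i).re)‖ ^ 2 + ‖WithLp.toLp 2 (fun i => (z i).im)‖ ^ 2 := by
  simp only [EuclideanSpace.norm_sq_eq, Real.norm_eq_abs, sq_abs, ← sum_add_distrib,
    Complex.sq_norm, Complex.normSq_apply, ← sq]

variable [DecidableEq m] [DecidableEq n]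

lemma specNorm_nonneg {𝕜 : Type*} [RCLike 𝕜] (A : Matrix m n 𝕜) : 0 ≤ specNorm A :=
  norm_nonneg _

lemma norm_toLp_mulVec_le {𝕜 : Type*} [RCLike 𝕜] (A : Matrix m n 𝕜) (x : n → 𝕜) :
    ‖WithLp.toLp 2 (A *ᵥ x)‖ ≤ specNorm A * ‖WithLp.toLp 2 x‖ :=
  (LinearMap.toContinuousLinearMap (toEuclideanLin A)).le_opNorm (WithLp.toLp 2 x)

lemma norm_toLp_le_specNorm_inv_mul {𝕜 : Type*} [RCLike 𝕜] {A : Matrix n n 𝕜} (hA : IsUnit A)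
    (x : n → 𝕜) : ‖WithLp.toLp 2 x‖ ≤ specNorm A⁻¹ * ‖WithLp.toLp 2 (A *ᵥ x)‖ := by
  simpa [mulVec_mulVec, nonsing_inv_mul A ((isUnit_iff_isUnit_det A).mp hA)]
    using norm_toLp_mulVec_le A⁻¹ (A *ᵥ x)

lemma norm_toLp_map_ofReal_mulVec_le (A : Matrix m n ℝ) (x : n → ℂ) :
    ‖WithLp.toLp 2 (A.map Complex.ofReal *ᵥ x)‖ ≤ specNorm A * ‖WithLp.toLp 2 x‖ := by
  have hre : (fun i => ((A.map Complex.ofReal *ᵥ x) i).re) = A *ᵥ fun j => (x j).re := by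
    ext i; simp [mulVec, dotProduct, Complex.re_sum]
  have him : (fun i => ((A.map Complex.ofReal *ᵥ x) i).im) = A *ᵥ fun j => (x j).im := by
    ext i; simp [mulVec, dotProduct, Complex.im_sum]
  rw [← pow_le_pow_iff_left₀ (norm_nonneg _) (by positivity [specNorm_nonneg A]) two_ne_zero,
    mul_pow, norm_sq_toLp_eq_re_add_im, norm_sq_toLp_eq_re_add_im x, hre, him, mul_add,
    ← mul_pow, ← mul_pow]
  gcongr <;> exact norm_toLp_mulVec_le A _

end SpecNorm

section Blocks

variable {N : ℕ} {d : Fin N → ℕ} (B : Matrix ((i : Fin N) × Fin (d i)) ((i : Fin N) × Fin (d i)) ℝ)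

def blkVec {α : Type*} (v : ((i : Fin N) × Fin (d i)) → α) (i : Fin N) : Fin (d i) → α :=
  fun a => v ⟨i, a⟩

lemma blkVec_map_ofReal_mulVec (v : ((i : Fin N) × Fin (d i)) → ℂ) (i : Fin N) :
    blkVec (B.map Complex.ofReal *ᵥ v) i = ∑ j, (blk B i j).map Complex.ofReal *ᵥ blkVec v j := by
  ext a
  simp [blkVec, mulVec, dotProduct, Fintype.sum_sigma, blk, Finset.sum_apply]

lemma blk_sub_smul_mulVec_eq_neg_sum {lam : ℂ} {v : ((i : Fin N) × Fin (d i)) → ℂ}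
    (hv : (B.map Complex.ofReal - lam • 1) *ᵥ v = 0) (i : Fin N) :
    ((blk B i i).map Complex.ofReal - lam • 1) *ᵥ blkVec v i
      = -∑ j ∈ univ.erase i, (blk B i j).map Complex.ofReal *ᵥ blkVec v j := by
  have hrow : blkVec (B.map Complex.ofReal *ᵥ v) i = lam • blkVec v i := by
    rw [sub_mulVec, smul_mulVec, one_mulVec, sub_eq_zero] at hv
    rw [hv]; rfl
  rw [blkVec_map_ofReal_mulVec, ← add_sum_erase _ _ (mem_univ i)] at hrow
  rw [sub_mulVec, smul_mulVec, one_mulVec, ← hrow]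
  abel

lemma norm_blk_sub_smul_mulVec_le {lam : ℂ} {v : ((i : Fin N) × Fin (d i)) → ℂ}
    (hv : (B.map Complex.ofReal - lam • 1) *ᵥ v = 0) {i : Fin N}
    (hmax : ∀ j, ‖WithLp.toLp 2 (blkVec v j)‖ ≤ ‖WithLp.toLp 2 (blkVec v i)‖) :
    ‖WithLp.toLp 2 (((blk B i i).map Complex.ofReal - lam • 1) *ᵥ blkVec v i)‖
      ≤ (∑ j ∈ univ.erase i, specNorm (blk B i j)) * ‖WithLp.toLp 2 (blkVec v i)‖ := by
  rw [blk_sub_smul_mulVec_eq_neg_sum B hv, sum_mul]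
  calc ‖WithLp.toLp 2 (-∑ j ∈ univ.erase i, (blk B i j).map Complex.ofReal *ᵥ blkVec v j)‖
      ≤ ∑ j ∈ univ.erase i, ‖WithLp.toLp 2 ((blk B i j).map Complex.ofReal *ᵥ blkVec v j)‖ := by
        rw [WithLp.toLp_neg, norm_neg, WithLp.toLp_sum]
        exact norm_sum_le _ _
    _ ≤ ∑ j ∈ univ.erase i, specNorm (blk B i j) * ‖WithLp.toLp 2 (blkVec v j)‖ :=
        sum_le_sum fun j _ => norm_toLp_map_ofReal_mulVec_le _ _
    _ ≤ ∑ j ∈ univ.erase i, specNorm (blk B i j) * ‖WithLp.toLp 2 (blkVec v i)‖ :=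
        sum_le_sum fun j _ => mul_le_mul_of_nonneg_left (hmax j) (specNorm_nonneg _)

end Blocks

/-- block Gershgorin circle theorem -/
theorem block_gershgorin {N : ℕ} {d : Fin N → ℕ}
    (B : Matrix ((i : Fin N) × Fin (d i)) ((i : Fin N) × Fin (d i)) ℝ)
    (lam : ℂ) (hlam : (B.map (Complex.ofReal) - lam • 1).det = 0) :
    ∃ i, (¬ IsUnit ((blk B i i).map Complex.ofReal - lam • 1)) ∨
      (specNorm (((blk B i i).map Complex.ofReal - lam • 1)⁻¹))⁻¹
        ≤ ∑ j ∈ Finset.univ.erase i, specNorm (blk B i j) := by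
  obtain ⟨v, hv0, hv⟩ := exists_mulVec_eq_zero_iff.mpr hlam
  obtain ⟨p, hp⟩ := Function.ne_iff.mp hv0
  have : Nonempty (Fin N) := ⟨p.1⟩
  obtain ⟨i, hmax⟩ := Finite.exists_max fun j => ‖WithLp.toLp 2 (blkVec v j)‖
  have hvi : 0 < ‖WithLp.toLp 2 (blkVec v i)‖ := by
    refine (norm_pos_iff.mpr fun h => hp ?_).trans_le (hmax p.1)
    exact congrFun (congrArg WithLp.ofLp h) p.2
  refine ⟨i, or_iff_not_imp_left.mpr fun hA => ?_⟩
  rw [not_not] at hA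
  set c := specNorm ((blk B i i).map Complex.ofReal - lam • 1)⁻¹
  set S := ∑ j ∈ univ.erase i, specNorm (blk B i j)
  have hbound : ‖WithLp.toLp 2 (blkVec v i)‖ ≤ c * S * ‖WithLp.toLp 2 (blkVec v i)‖ := by
    rw [mul_assoc]
    exact (norm_toLp_le_specNorm_inv_mul hA _).trans
      (mul_le_mul_of_nonneg_left (norm_blk_sub_smul_mulVec_le B hv hmax) (specNorm_nonneg _))
  have hcS : 1 ≤ c * S := le_of_mul_le_mul_right (by rwa [one_mul]) hvi
  have hc : 0 < c :=
    lt_of_mul_lt_mul_right (by linarith) (sum_nonneg fun j _ => specNorm_nonneg (blk B i j))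
  exact (inv_le_iff_one_le_mul₀' hc).mpr hcS
end

section
/- Let Q = Qᵀ ≻ 0 be strictly block diagonally dominant with gaps δ_i(Q) > 0, A = diag(α_1 I_{n_1},...,α_N I_{n_N}) with α_i > 0, and r ∈ ℝ^n. With x̂ = -Q⁻¹r and x̂_A = -(Q+A)⁻¹r, the block-maximum norm error satisfies ‖x̂ - x̂_A‖_{2,p} ≤ max_i ‖r^{[i]}‖_2 / ( β_p(I + A⁻¹Q) · β_p(Q) ), where β_p(I + A⁻¹Q) = min_i (1 + α_i⁻¹ δ_i(Q)) and β_p(Q) = min_i δ_i(Q). -/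
open Matrix BigOperators Finset

/-!
With `M = I + A⁻¹Q` one has `M (Q⁻¹ - (Q + A)⁻¹) = Q⁻¹`, so the error `y = (Q⁻¹ - (Q + A)⁻¹) r`
satisfies `β(M) ‖y‖ ≤ ‖Q⁻¹ r‖` and `β(Q) ‖Q⁻¹ r‖ ≤ ‖r‖` in the block maximum norm. Both are
instances of one estimate for block diagonally dominant `B`: in a block `i` where `‖x^{[i]}‖₂` is
largest, `‖(B x)^{[i]}‖₂ ≥ (c_i - Σ_{j≠i} ‖B_{ij}‖₂) ‖x^{[i]}‖₂` whenever `‖B_{ii} v‖₂ ≥ c_i ‖v‖₂`.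
For `Q` take `c_i = λ_min(Q_{ii})`; the blocks of `M` are `I + α_i⁻¹ Q_{ii}` and `α_i⁻¹ Q_{ij}`,
so `c_i = 1 + α_i⁻¹ λ_min(Q_{ii})` and the gap becomes `1 + α_i⁻¹ δ_i`.
-/

section MinEig

variable {n : Type*} [Fintype n] [DecidableEq n]

theorem minEig_eq_sInf_spectrum (B : Matrix n n ℝ) : minEig B = sInf (spectrum ℝ B) := by
  rw [minEig]
  congr 1
  ext μ
  rw [Set.mem_ofPred_eq, spectrum.mem_iff, Algebra.algebraMap_eq_smul_one, ← IsUnit.neg_iff,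
    neg_sub, isUnit_iff_isUnit_det, isUnit_iff_ne_zero, not_not]

theorem minEig_le_of_mem_spectrum {B : Matrix n n ℝ} {μ : ℝ} (hμ : μ ∈ spectrum ℝ B) :
    minEig B ≤ μ := by
  rw [minEig_eq_sInf_spectrum]
  exact csInf_le B.finite_real_spectrum.bddBelow hμ

theorem Matrix.IsHermitian.posSemidef_sub_minEig_smul_one {B : Matrix n n ℝ}
    (hB : B.IsHermitian) : (B - minEig B • 1).PosSemidef := by
  refine posSemidef_iff_isHermitian_and_spectrum_nonneg.mpr
    ⟨hB.sub (isHermitian_one.smul rfl), ?_⟩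
  rw [← Algebra.algebraMap_eq_smul_one, ← spectrum.sub_singleton_eq]
  rintro _ ⟨μ, hμ, _, rfl, rfl⟩
  exact sub_nonneg.mpr (minEig_le_of_mem_spectrum hμ)

theorem Matrix.IsHermitian.minEig_mul_dotProduct_le {B : Matrix n n ℝ} (hB : B.IsHermitian)
    (v : n → ℝ) : minEig B * (v ⬝ᵥ v) ≤ v ⬝ᵥ B *ᵥ v := by
  have h := hB.posSemidef_sub_minEig_smul_one.dotProduct_mulVec_nonneg v
  rw [star_trivial, sub_mulVec, smul_mulVec, one_mulVec, dotProduct_sub, dotProduct_smul,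
    smul_eq_mul] at h
  linarith

end MinEig

section EuclideanNorm

variable {k l : ℕ}

theorem eNorm_eq_norm_toLp (v : Fin k → ℝ) : eNorm v = ‖WithLp.toLp 2 v‖ := by
  simp [eNorm, EuclideanSpace.norm_eq]

theorem eNorm_nonneg (v : Fin k → ℝ) : 0 ≤ eNorm v := Real.sqrt_nonneg _

theorem eNorm_neg (v : Fin k → ℝ) : eNorm (-v) = eNorm v := by
  simp [eNorm]

theorem eNorm_mul_self (v : Fin k → ℝ) : eNorm v * eNorm v = v ⬝ᵥ v := by
  rw [eNorm, Real.mul_self_sqrt (Finset.sum_nonneg fun a _ => sq_nonneg (v a))]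
  simp [dotProduct, sq]

theorem dotProduct_le_eNorm_mul_eNorm (v w : Fin k → ℝ) : v ⬝ᵥ w ≤ eNorm v * eNorm w := by
  have h := real_inner_le_norm (WithLp.toLp 2 w) (WithLp.toLp 2 v)
  rwa [EuclideanSpace.inner_eq_star_dotProduct, star_trivial, ← eNorm_eq_norm_toLp,
    ← eNorm_eq_norm_toLp, mul_comm] at h

theorem eNorm_sub_eNorm_le_eNorm_add (u w : Fin k → ℝ) : eNorm u - eNorm w ≤ eNorm (u + w) := by
  simpa only [eNorm_eq_norm_toLp, WithLp.toLp_add] using norm_sub_le_norm_add _ _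

theorem eNorm_sum_le {ι : Type*} (s : Finset ι) (f : ι → Fin k → ℝ) :
    eNorm (∑ j ∈ s, f j) ≤ ∑ j ∈ s, eNorm (f j) := by
  simpa only [eNorm_eq_norm_toLp, WithLp.toLp_sum] using norm_sum_le _ _

theorem eNorm_mulVec_le (B : Matrix (Fin k) (Fin l) ℝ) (v : Fin l → ℝ) :
    eNorm (B *ᵥ v) ≤ specNorm B * eNorm v := by
  rw [eNorm_eq_norm_toLp, eNorm_eq_norm_toLp, specNorm]
  exact (LinearMap.toContinuousLinearMap (Matrix.toEuclideanLin B)).le_opNorm (WithLp.toLp 2 v)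

theorem specNorm_smul {t : ℝ} (ht : 0 ≤ t) (B : Matrix (Fin k) (Fin l) ℝ) :
    specNorm (t • B) = t * specNorm B := by
  rw [specNorm, specNorm, map_smul, map_smul, norm_smul, Real.norm_of_nonneg ht]

theorem mul_eNorm_le_eNorm_mulVec {B : Matrix (Fin k) (Fin k) ℝ} {m : ℝ}
    (hB : ∀ v, m * (v ⬝ᵥ v) ≤ v ⬝ᵥ B *ᵥ v) (v : Fin k → ℝ) :
    m * eNorm v ≤ eNorm (B *ᵥ v) := by
  rcases (eNorm_nonneg v).eq_or_lt with hv | hv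
  · rw [← hv, mul_zero]
    exact eNorm_nonneg _
  refine le_of_mul_le_mul_right ?_ hv
  calc m * eNorm v * eNorm v = m * (v ⬝ᵥ v) := by rw [mul_assoc, eNorm_mul_self]
    _ ≤ v ⬝ᵥ B *ᵥ v := hB v
    _ ≤ eNorm (B *ᵥ v) * eNorm v := by
      rw [mul_comm]
      exact dotProduct_le_eNorm_mul_eNorm _ _

end EuclideanNorm

section Blocks

variable {N : ℕ} {d : Fin N → ℕ}

theorem blk_add (B C : Matrix ((i : Fin N) × Fin (d i)) ((i : Fin N) × Fin (d i)) ℝ)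
    (i j : Fin N) : blk (B + C) i j = blk B i j + blk C i j := rfl

theorem blk_one_self (i : Fin N) :
    blk (1 : Matrix ((i : Fin N) × Fin (d i)) ((i : Fin N) × Fin (d i)) ℝ) i i = 1 := by
  ext a b
  simp [blk, one_apply]

theorem blk_one_of_ne {i j : Fin N} (hij : i ≠ j) :
    blk (1 : Matrix ((i : Fin N) × Fin (d i)) ((i : Fin N) × Fin (d i)) ℝ) i j = 0 := by
  ext a b
  simp [blk, one_apply, hij]

theorem blk_diagonal_mul (s : Fin N → ℝ)
    (B : Matrix ((i : Fin N) × Fin (d i)) ((i : Fin N) × Fin (d i)) ℝ) (i j : Fin N) :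
    blk (diagonal (fun a => s a.1) * B) i j = s i • blk B i j := by
  ext a b
  simp [blk, diagonal_mul]

theorem Matrix.IsHermitian.blk_self
    {B : Matrix ((i : Fin N) × Fin (d i)) ((i : Fin N) × Fin (d i)) ℝ} (hB : B.IsHermitian)
    (i : Fin N) : (blk B i i).IsHermitian := by
  ext a b
  exact congrFun (congrFun hB ⟨i, a⟩) ⟨i, b⟩

theorem blk_mulVec (B : Matrix ((i : Fin N) × Fin (d i)) ((i : Fin N) × Fin (d i)) ℝ)
    (x : ((i : Fin N) × Fin (d i)) → ℝ) (i : Fin N) :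
    (fun a => (B *ᵥ x) ⟨i, a⟩) = ∑ j, blk B i j *ᵥ fun b => x ⟨j, b⟩ := by
  ext a
  simp only [Finset.sum_apply, mulVec, dotProduct, blk, ← Finset.univ_sigma_univ,
    Finset.sum_sigma]

theorem eNorm_le_blockVecNorm (x : ((i : Fin N) × Fin (d i)) → ℝ) (i : Fin N) :
    eNorm (fun a => x ⟨i, a⟩) ≤ blockVecNorm x :=
  le_ciSup (f := fun i => eNorm (fun a => x ⟨i, a⟩)) (Finite.bddAbove_range _) i

theorem exists_blockVecNorm_eq_eNorm [NeZero N] (x : ((i : Fin N) × Fin (d i)) → ℝ) :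
    ∃ i, blockVecNorm x = eNorm (fun a => x ⟨i, a⟩) :=
  (exists_eq_ciSup_of_finite).imp fun _ h => h.symm

theorem blockVecNorm_neg (x : ((i : Fin N) × Fin (d i)) → ℝ) :
    blockVecNorm (-x) = blockVecNorm x :=
  iSup_congr fun i => eNorm_neg (fun a => x ⟨i, a⟩)

/-- The lower-bound form of `‖B⁻¹‖_{2,p} ≤ 1 / β_p(B)`; `c i` plays the role of
`‖(B[i][i])⁻¹‖₂⁻¹`. -/
theorem mul_blockVecNorm_le_blockVecNorm_mulVec
    (B : Matrix ((i : Fin N) × Fin (d i)) ((i : Fin N) × Fin (d i)) ℝ) {c : Fin N → ℝ} {β : ℝ}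
    (hc : ∀ i (v : Fin (d i) → ℝ), c i * eNorm v ≤ eNorm (blk B i i *ᵥ v))
    (hβ : ∀ i, β ≤ c i - ∑ j ∈ univ.erase i, specNorm (blk B i j))
    (x : ((i : Fin N) × Fin (d i)) → ℝ) :
    β * blockVecNorm x ≤ blockVecNorm (B *ᵥ x) := by
  rcases Nat.eq_zero_or_pos N with rfl | hN
  · simp [blockVecNorm]
  have : NeZero N := ⟨hN.ne'⟩
  obtain ⟨i, hi⟩ := exists_blockVecNorm_eq_eNorm x
  set xi : Fin (d i) → ℝ := fun a => x ⟨i, a⟩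
  have hoff : eNorm (∑ j ∈ univ.erase i, blk B i j *ᵥ fun b => x ⟨j, b⟩)
      ≤ (∑ j ∈ univ.erase i, specNorm (blk B i j)) * eNorm xi := by
    rw [Finset.sum_mul]
    refine (eNorm_sum_le _ _).trans (Finset.sum_le_sum fun j _ => ?_)
    refine (eNorm_mulVec_le _ _).trans ?_
    exact mul_le_mul_of_nonneg_left (hi ▸ eNorm_le_blockVecNorm x j) (norm_nonneg _)
  calc β * blockVecNorm x
      ≤ (c i - ∑ j ∈ univ.erase i, specNorm (blk B i j)) * eNorm xi := by
        rw [hi]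
        exact mul_le_mul_of_nonneg_right (hβ i) (eNorm_nonneg _)
    _ ≤ eNorm (blk B i i *ᵥ xi) - eNorm (∑ j ∈ univ.erase i, blk B i j *ᵥ fun b => x ⟨j, b⟩) := by
        linarith [hc i xi]
    _ ≤ eNorm (fun a => (B *ᵥ x) ⟨i, a⟩) := by
        rw [blk_mulVec, ← Finset.add_sum_erase _ _ (Finset.mem_univ i)]
        exact eNorm_sub_eNorm_le_eNorm_add _ _
    _ ≤ blockVecNorm (B *ᵥ x) := eNorm_le_blockVecNorm _ i

end Blocks

theorem Matrix.one_add_inv_mul_mul_inv_sub_inv {n α : Type*} [Fintype n] [DecidableEq n]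
    [CommRing α] {Q A : Matrix n n α} (hQ : IsUnit Q.det) (hA : IsUnit A.det)
    (hQA : IsUnit (Q + A).det) :
    (1 + A⁻¹ * Q) * (Q⁻¹ - (Q + A)⁻¹) = Q⁻¹ := by
  have hM : 1 + A⁻¹ * Q = A⁻¹ * (Q + A) := by
    rw [mul_add, nonsing_inv_mul _ hA, add_comm]
  have hQinv : (1 + A⁻¹ * Q) * Q⁻¹ = Q⁻¹ + A⁻¹ := by
    rw [add_mul, one_mul, mul_assoc, mul_nonsing_inv _ hQ, mul_one]
  have hQAinv : (1 + A⁻¹ * Q) * (Q + A)⁻¹ = A⁻¹ := by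
    rw [hM, mul_assoc, mul_nonsing_inv _ hQA, mul_one]
  rw [mul_sub, hQinv, hQAinv, add_sub_cancel_right]

theorem Matrix.inv_diagonal_of_ne_zero {n K : Type*} [Fintype n] [DecidableEq n] [Field K]
    {v : n → K} (hv : ∀ i, v i ≠ 0) : (diagonal v)⁻¹ = diagonal v⁻¹ := by
  refine inv_eq_left_inv ?_
  rw [diagonal_mul_diagonal, ← diagonal_one]
  exact congrArg diagonal (funext fun i => inv_mul_cancel₀ (hv i))

theorem lt_ciInf_of_finite {ι α : Type*} [Finite ι] [Nonempty ι]
    [ConditionallyCompleteLinearOrder α] {f : ι → α} {a : α} (h : ∀ i, a < f i) :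
    a < ⨅ i, f i := by
  obtain ⟨i, hi⟩ := exists_eq_ciInf_of_finite (f := f)
  exact hi ▸ h i

section Gap

variable {N : ℕ} {d : Fin N → ℕ}

theorem Matrix.IsHermitian.mul_blockVecNorm_le_blockVecNorm_mulVec
    {Q : Matrix ((i : Fin N) × Fin (d i)) ((i : Fin N) × Fin (d i)) ℝ} (hQ : Q.IsHermitian)
    {β : ℝ} (hβ : ∀ i, β ≤ minEig (blk Q i i) - ∑ j ∈ univ.erase i, specNorm (blk Q i j))
    (x : ((i : Fin N) × Fin (d i)) → ℝ) :
    β * blockVecNorm x ≤ blockVecNorm (Q *ᵥ x) :=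
  _root_.mul_blockVecNorm_le_blockVecNorm_mulVec Q
    (fun i => mul_eNorm_le_eNorm_mulVec (hQ.blk_self i).minEig_mul_dotProduct_le) hβ x

theorem Matrix.IsHermitian.mul_blockVecNorm_le_blockVecNorm_one_add_diagonal_mul_mulVec
    {Q : Matrix ((i : Fin N) × Fin (d i)) ((i : Fin N) × Fin (d i)) ℝ} (hQ : Q.IsHermitian)
    {s : Fin N → ℝ} (hs : ∀ i, 0 ≤ s i) {β : ℝ}
    (hβ : ∀ i, β ≤ 1 + s i * (minEig (blk Q i i) - ∑ j ∈ univ.erase i, specNorm (blk Q i j)))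
    (x : ((i : Fin N) × Fin (d i)) → ℝ) :
    β * blockVecNorm x ≤ blockVecNorm ((1 + diagonal (fun a => s a.1) * Q) *ᵥ x) := by
  refine _root_.mul_blockVecNorm_le_blockVecNorm_mulVec _
    (c := fun i => 1 + s i * minEig (blk Q i i)) (fun i => mul_eNorm_le_eNorm_mulVec fun v => ?_)
    (fun i => ?_) x
  · rw [blk_add, blk_one_self, blk_diagonal_mul, add_mulVec, one_mulVec, smul_mulVec,
      dotProduct_add, dotProduct_smul, smul_eq_mul]
    linarith [mul_le_mul_of_nonneg_left ((hQ.blk_self i).minEig_mul_dotProduct_le v) (hs i)]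
  · have hoff : ∑ j ∈ univ.erase i, specNorm (blk (1 + diagonal (fun a => s a.1) * Q) i j)
        = s i * ∑ j ∈ univ.erase i, specNorm (blk Q i j) := by
      rw [Finset.mul_sum]
      refine Finset.sum_congr rfl fun j hj => ?_
      rw [blk_add, blk_one_of_ne (Finset.ne_of_mem_erase hj).symm, zero_add, blk_diagonal_mul,
        specNorm_smul (hs i)]
    rw [hoff]
    linarith [hβ i]

end Gap

theorem absolute_error_bound {N : ℕ} (hN : 0 < N) {d : Fin N → ℕ}
    (Q : Matrix ((i : Fin N) × Fin (d i)) ((i : Fin N) × Fin (d i)) ℝ)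
    (hQ : Q.PosDef)
    (δ : Fin N → ℝ)
    (hδ : ∀ i, δ i = minEig (blk Q i i) - ∑ j ∈ Finset.univ.erase i, specNorm (blk Q i j))
    (hδpos : ∀ i, 0 < δ i)
    (α : Fin N → ℝ) (hα : ∀ i, 0 < α i)
    (A : Matrix ((i : Fin N) × Fin (d i)) ((i : Fin N) × Fin (d i)) ℝ)
    (hA : A = Matrix.diagonal (fun a => α a.1))
    (r : ((i : Fin N) × Fin (d i)) → ℝ) :
    blockVecNorm (-(Q⁻¹.mulVec r) - -((Q + A)⁻¹.mulVec r))
      ≤ (⨆ i, eNorm (fun a => r ⟨i, a⟩))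
        / ((⨅ i, (1 + (α i)⁻¹ * δ i)) * (⨅ i, δ i)) := by
  have : Nonempty (Fin N) := Fin.pos_iff_nonempty.mp hN
  have hApos : A.PosDef := hA ▸ posDef_diagonal_iff.mpr fun a => hα a.1
  set βQ := ⨅ i, δ i
  set βM := ⨅ i, (1 + (α i)⁻¹ * δ i)
  have hβQ : 0 < βQ := lt_ciInf_of_finite hδpos
  have hβM : 0 < βM :=
    lt_ciInf_of_finite fun i => add_pos one_pos (mul_pos (inv_pos.mpr (hα i)) (hδpos i))
  set z := Q⁻¹ *ᵥ r
  set y := (Q⁻¹ - (Q + A)⁻¹) *ᵥ r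
  have hz : βQ * blockVecNorm z ≤ blockVecNorm r := by
    conv_rhs => rw [← one_mulVec r, ← mul_nonsing_inv Q hQ.det_pos.ne'.isUnit, ← mulVec_mulVec]
    exact hQ.1.mul_blockVecNorm_le_blockVecNorm_mulVec
      (fun i => hδ i ▸ ciInf_le (Finite.bddBelow_range δ) i) z
  have hMy : (1 + A⁻¹ * Q) *ᵥ y = z := by
    rw [mulVec_mulVec, one_add_inv_mul_mul_inv_sub_inv hQ.det_pos.ne'.isUnit
      hApos.det_pos.ne'.isUnit (hQ.add hApos).det_pos.ne'.isUnit]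
  have hy : βM * blockVecNorm y ≤ blockVecNorm z := by
    rw [← hMy, hA, inv_diagonal_of_ne_zero fun a : (i : Fin N) × Fin (d i) => (hα a.1).ne']
    exact hQ.1.mul_blockVecNorm_le_blockVecNorm_one_add_diagonal_mul_mulVec
      (s := fun i => (α i)⁻¹) (fun i => (inv_pos.mpr (hα i)).le)
      (fun i => hδ i ▸ ciInf_le (Finite.bddBelow_range _) i) y
  rw [neg_sub_neg, ← neg_sub, ← sub_mulVec, blockVecNorm_neg, le_div_iff₀ (by positivity)]
  calc blockVecNorm y * (βM * βQ) = βQ * (βM * blockVecNorm y) := by ring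
    _ ≤ βQ * blockVecNorm z := mul_le_mul_of_nonneg_left hy hβQ.le
    _ ≤ blockVecNorm r := hz
end
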